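/- Consider the state ρ_{AB} = ½ Φ_{AB} + ½ (I_A/2 ⊗ |e⟩⟨e|_B) on ℂ² ⊗ ℂ³, where Φ_{AB} is the two-dimensional maximally entangled state (supported on the first two basis vectors of the B system), I_A is the identity on ℂ², and |e⟩ is the third basis vector of ℂ³ (orthogonal to the support of Φ on B). Then ρ_{AB} is two-extendible with respect to B, and ρ_{AB} is not separable. -/

import Mathlib

open Matrix Kronecker
open scoped ComplexOrder

noncomputable section

/-- A quantum state: a positive semidefinite matrix with unit trace. -/
def IsState {n : Type} [Fintype n] (ρ : Matrix n n ℂ) : Prop :=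
  ρ.PosSemidef ∧ ρ.trace = 1

/-- A pure quantum state: a rank-one projection onto a unit vector. -/
def IsPureState {n : Type} [Fintype n] (ρ : Matrix n n ℂ) : Prop :=
  ∃ v : n → ℂ, (∑ i, Complex.normSq (v i)) = 1 ∧ ρ = Matrix.vecMulVec v (star v)

/-- The maximally entangled state `(1/|A|) ∑_{m,m'} |mm⟩⟨m'm'|` on `A ⊗ A`. -/
def maxEnt (A : Type) [Fintype A] [DecidableEq A] : Matrix (A × A) (A × A) ℂ :=
  Matrix.of fun p q => if p.1 = p.2 ∧ q.1 = q.2 then (1 : ℂ) / (Fintype.card A : ℂ) else 0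

/-- The marginal of an operator on `A ⊗ B^{⊗ k}` obtained by tracing out all but the
first copy of `B`. -/
def marginalFirst {A B : Type} [Fintype B] [DecidableEq B] {k : ℕ} (hk : 0 < k)
    (ω : Matrix (A × (Fin k → B)) (A × (Fin k → B)) ℂ) :
    Matrix (A × B) (A × B) ℂ :=
  Matrix.of fun p q => ∑ f : Fin k → B,
    if f ⟨0, hk⟩ = p.2 then ω (p.1, f) (q.1, Function.update f ⟨0, hk⟩ q.2) else 0

/-- Conjugation `W^π ω (W^π)†` of an operator on `A ⊗ B^{⊗ k}` by the unitary permuting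
the `k` copies of `B` according to `π`. -/
def permAction {A B : Type} {k : ℕ} (π : Equiv.Perm (Fin k))
    (ω : Matrix (A × (Fin k → B)) (A × (Fin k → B)) ℂ) :
    Matrix (A × (Fin k → B)) (A × (Fin k → B)) ℂ :=
  Matrix.of fun p q => ω (p.1, p.2 ∘ π) (q.1, q.2 ∘ π)

/-- A bipartite state (or operator) `ρ` on `A ⊗ B` is `k`-extendible with respect to `B`
if it has a permutation-invariant state extension on `A ⊗ B^{⊗ k}`. -/
def kExtendible {A B : Type} [Fintype A] [Fintype B] [DecidableEq B]
    (k : ℕ) (hk : 2 ≤ k) (ρ : Matrix (A × B) (A × B) ℂ) : Prop :=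
  ∃ ω : Matrix (A × (Fin k → B)) (A × (Fin k → B)) ℂ,
    IsState ω ∧ (∀ π : Equiv.Perm (Fin k), permAction π ω = ω) ∧
      marginalFirst (show 0 < k by omega) ω = ρ

/-- The tensor extension `id_R ⊗ Φ` of a linear map on matrices. -/
def tensorId (R : Type) {A B : Type} [Fintype A] [Fintype B]
    (Φ : Matrix A A ℂ →ₗ[ℂ] Matrix B B ℂ) :
    Matrix (R × A) (R × A) ℂ →ₗ[ℂ] Matrix (R × B) (R × B) ℂ where
  toFun X := Matrix.of fun p q => Φ (Matrix.of fun i j => X (p.1, i) (q.1, j)) p.2 q.2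
  map_add' X Y := by
    ext p q
    have h : (Matrix.of fun i j => (X + Y) (p.1, i) (q.1, j))
        = (Matrix.of fun i j => X (p.1, i) (q.1, j))
          + (Matrix.of fun i j => Y (p.1, i) (q.1, j)) := rfl
    show Φ (Matrix.of fun i j => (X + Y) (p.1, i) (q.1, j)) p.2 q.2 = _
    rw [h, map_add]
    rfl
  map_smul' c X := by
    ext p q
    have h : (Matrix.of fun i j => (c • X) (p.1, i) (q.1, j))
        = c • (Matrix.of fun i j => X (p.1, i) (q.1, j)) := rfl
    show Φ (Matrix.of fun i j => (c • X) (p.1, i) (q.1, j)) p.2 q.2 = _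
    rw [h, _root_.map_smul]
    rfl

/-- Complete positivity of a linear map on matrices. -/
def IsCP {A B : Type} [Fintype A] [Fintype B]
    (Φ : Matrix A A ℂ →ₗ[ℂ] Matrix B B ℂ) : Prop :=
  ∀ (R : Type) [Fintype R] (X : Matrix (R × A) (R × A) ℂ),
    X.PosSemidef → ((tensorId R Φ) X).PosSemidef

/-- A quantum channel: a completely positive trace-preserving linear map. -/
def IsCPTP {A B : Type} [Fintype A] [Fintype B]
    (Φ : Matrix A A ℂ →ₗ[ℂ] Matrix B B ℂ) : Prop :=
  IsCP Φ ∧ ∀ X : Matrix A A ℂ, (Φ X).trace = X.trace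

/-- A bipartite channel `N : AB → A'B'` is `k`-extendible if it is a channel and has a
channel extension `M : A B^{⊗k} → A' B'^{⊗k}` whose marginal on the first `B'` copy
reproduces `N` on the corresponding marginal input state, and which is covariant with
respect to simultaneous permutations of the `k` input and output `B` factors. -/
def kExtendibleChannel {A B A' B' : Type} [Fintype A] [Fintype B] [DecidableEq B]
    [Fintype A'] [Fintype B'] [DecidableEq B']
    (k : ℕ) (hk : 2 ≤ k)
    (N : Matrix (A × B) (A × B) ℂ →ₗ[ℂ] Matrix (A' × B') (A' × B') ℂ) : Prop :=
  IsCPTP N ∧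
  ∃ M : Matrix (A × (Fin k → B)) (A × (Fin k → B)) ℂ →ₗ[ℂ]
      Matrix (A' × (Fin k → B')) (A' × (Fin k → B')) ℂ,
    IsCPTP M ∧
    (∀ θ, IsState θ →
      marginalFirst (show 0 < k by omega) (M θ)
        = N (marginalFirst (show 0 < k by omega) θ)) ∧
    (∀ (π : Equiv.Perm (Fin k)) θ, M (permAction π θ) = permAction π (M θ))

/-- The ε-hypothesis-testing divergence `D_h^ε(ρ‖σ)`, valued in the extended reals. -/
def DH {n : Type} [Fintype n] [DecidableEq n] (ε : ℝ) (ρ σ : Matrix n n ℂ) : EReal :=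
  let β : ℝ := sInf { x : ℝ | ∃ Λ : Matrix n n ℂ, Λ.PosSemidef ∧ (1 - Λ).PosSemidef ∧
      1 - ε ≤ ((Λ * ρ).trace).re ∧ x = ((Λ * σ).trace).re }
  if β ≤ 0 then ⊤ else (((- Real.logb 2 β) : ℝ) : EReal)

/-- The k-unextendible ε-hypothesis-testing divergence
`E_k^ε(A;B)_ρ = inf {D_h^ε(ρ‖σ) : σ k-extendible state}`. -/
def EkEps {A B : Type} [Fintype A] [DecidableEq A] [Fintype B] [DecidableEq B]
    (k : ℕ) (hk : 2 ≤ k) (ε : ℝ) (ρ : Matrix (A × B) (A × B) ℂ) : EReal :=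
  sInf { x : EReal | ∃ σ : Matrix (A × B) (A × B) ℂ,
    IsState σ ∧ kExtendible k hk σ ∧ x = DH ε ρ σ }

/-- The max-relative entropy `D_max(ρ‖σ) = inf {λ : ρ ≤ 2^λ σ}`, valued in the extended
reals (equal to `⊤` when the support condition fails). -/
def Dmax {n : Type} [Fintype n] (ρ σ : Matrix n n ℂ) : EReal :=
  sInf { x : EReal | ∃ lam : ℝ, x = (lam : EReal) ∧
    ((((2 : ℝ) ^ lam : ℝ) : ℂ) • σ - ρ).PosSemidef }

/-- The k-unextendible max-relative entropy of a bipartite state: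
`E_k^max(A;B)_ρ = inf {D_max(ρ‖σ) : σ k-extendible state}`. -/
def EkMaxState {A B : Type} [Fintype A] [Fintype B] [DecidableEq B]
    (k : ℕ) (hk : 2 ≤ k) (ρ : Matrix (A × B) (A × B) ℂ) : EReal :=
  sInf { x : EReal | ∃ σ : Matrix (A × B) (A × B) ℂ,
    IsState σ ∧ kExtendible k hk σ ∧ x = Dmax ρ σ }

/-- The k-unextendible max-relative entropy of a channel `N : A → B`:
`E_k^max(N) = sup_ψ E_k^max(R;B)_{(id ⊗ N)(ψ)}` over pure inputs `ψ_{RA}` with `R ≅ A`. -/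
def EkMaxChannel {A B : Type} [Fintype A] [Fintype B] [DecidableEq B]
    (k : ℕ) (hk : 2 ≤ k) (N : Matrix A A ℂ →ₗ[ℂ] Matrix B B ℂ) : EReal :=
  sSup { x : EReal | ∃ ψ : Matrix (A × A) (A × A) ℂ, IsPureState ψ ∧
    x = EkMaxState k hk (tensorId A N ψ) }

/-- Port shim: `Matrix.PosSemidef.sqrt` was removed from Mathlib; this restores its old definition. -/
def Matrix.PosSemidef.sqrt {𝕜 : Type*} [RCLike 𝕜] {n : Type*} [Fintype n] [DecidableEq n]
    {A : Matrix n n 𝕜} (hA : A.PosSemidef) : Matrix n n 𝕜 :=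
  hA.1.eigenvectorUnitary.1 * diagonal ((↑) ∘ (√·) ∘ hA.1.eigenvalues) *
    (star hA.1.eigenvectorUnitary : Matrix n n 𝕜)

open scoped Classical in
/-- The fidelity `F(ρ,σ) = ‖√ρ √σ‖₁² = (Tr √((√ρ√σ)† (√ρ√σ)))²`. -/
def fidelity {n : Type} [Fintype n] [DecidableEq n] (ρ σ : Matrix n n ℂ) : ℝ :=
  if h : ρ.PosSemidef ∧ σ.PosSemidef then
    (((Matrix.posSemidef_conjTranspose_mul_self (h.1.sqrt * h.2.sqrt)).sqrt).trace.re) ^ 2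
  else 0

/-- Reshuffling `(X ⊗ Y) ⊗ Z ≃ (X ⊗ Z) ⊗ Y`. -/
def assocShuffle (X Y Z : Type) : (X × Y) × Z ≃ (X × Z) × Y where
  toFun p := ((p.1.1, p.2), p.1.2)
  invFun p := ((p.1.1, p.2), p.1.2)
  left_inv _ := rfl
  right_inv _ := rfl

/-- Reshuffling `(X ⊗ Z) ⊗ W ≃ X ⊗ (W ⊗ Z)`. -/
def outShuffle (X Z W : Type) : (X × Z) × W ≃ X × (W × Z) where
  toFun p := (p.1.1, (p.2, p.1.2))
  invFun p := ((p.1, p.2.2), p.2.1)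
  left_inv _ := rfl
  right_inv _ := rfl

/-- Application of the channel `N : A → B` to the `A` factor of an operator on
`(X ⊗ A) ⊗ Z`, producing an operator on `X ⊗ (B ⊗ Z)`. -/
def channelStep (X Z : Type) [Fintype X] [Fintype Z] {A B : Type} [Fintype A] [Fintype B]
    (N : Matrix A A ℂ →ₗ[ℂ] Matrix B B ℂ)
    (ρ : Matrix ((X × A) × Z) ((X × A) × Z) ℂ) :
    Matrix (X × (B × Z)) (X × (B × Z)) ℂ :=
  (Matrix.reindex (outShuffle X Z B) (outShuffle X Z B))
    ((tensorId (X × Z) N)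
      ((Matrix.reindex (assocShuffle X A Z) (assocShuffle X A Z)) ρ))

/-- A separable bipartite state: a convex combination of product states. -/
def Separable {A B : Type} [Fintype A] [Fintype B]
    (σ : Matrix (A × B) (A × B) ℂ) : Prop :=
  ∃ (m : ℕ) (p : Fin m → ℝ) (τ : Fin m → Matrix A A ℂ) (ω : Fin m → Matrix B B ℂ),
    (∀ x, 0 ≤ p x) ∧ (∑ x, p x = 1) ∧ (∀ x, IsState (τ x)) ∧ (∀ x, IsState (ω x)) ∧
      σ = ∑ x, ((p x : ℂ) • (τ x ⊗ₖ ω x))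

/-- The tensor product `E ⊗ F` of two linear maps on matrices. -/
def tensorMap {A B A' B' : Type} [Fintype A] [Fintype B] [Fintype A'] [Fintype B']
    (E : Matrix A A ℂ →ₗ[ℂ] Matrix A' A' ℂ)
    (F : Matrix B B ℂ →ₗ[ℂ] Matrix B' B' ℂ) :
    Matrix (A × B) (A × B) ℂ →ₗ[ℂ] Matrix (A' × B') (A' × B') ℂ :=
  (Matrix.reindexLinearEquiv ℂ ℂ (Equiv.prodComm B' A') (Equiv.prodComm B' A')).toLinearMap
    ∘ₗ (tensorId B' E)
    ∘ₗ (Matrix.reindexLinearEquiv ℂ ℂ (Equiv.prodComm A B') (Equiv.prodComm A B')).toLinearMap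
    ∘ₗ (tensorId A F)

/-- A one-way LOCC channel from Alice to Bob: `L = ∑_y E^y ⊗ F^y` with `{E^y}` a quantum
instrument on Alice's side and each `F^y` a channel on Bob's side. -/
def IsOneWayLOCC {A B A' B' : Type} [Fintype A] [Fintype B] [Fintype A'] [Fintype B']
    (L : Matrix (A × B) (A × B) ℂ →ₗ[ℂ] Matrix (A' × B') (A' × B') ℂ) : Prop :=
  ∃ (m : ℕ) (E : Fin m → (Matrix A A ℂ →ₗ[ℂ] Matrix A' A' ℂ))
      (F : Fin m → (Matrix B B ℂ →ₗ[ℂ] Matrix B' B' ℂ)),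
    (∀ y, IsCP (E y)) ∧ (∀ X : Matrix A A ℂ, (∑ y, (E y) X).trace = X.trace) ∧
    (∀ y, IsCPTP (F y)) ∧ L = ∑ y, tensorMap (E y) (F y)

end

/-- The state `½ Φ_{AB} + ½ (I_A/2 ⊗ |e⟩⟨e|_B)` on `ℂ² ⊗ ℂ³`, where `Φ` is the
two-dimensional maximally entangled state supported on the first two basis vectors of the
`B` system and `|e⟩` is the third basis vector of `ℂ³`. -/
noncomputable def halfErasedBell : Matrix (Fin 2 × Fin 3) (Fin 2 × Fin 3) ℂ :=
  Matrix.of fun p q =>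
    (1 / 2) * (if ((p.2 : ℕ) = (p.1 : ℕ) ∧ (q.2 : ℕ) = (q.1 : ℕ)) then (1 / 2 : ℂ) else 0)
    + (1 / 2) * (if (p.1 = q.1 ∧ (p.2 : ℕ) = 2 ∧ (q.2 : ℕ) = 2) then (1 / 2 : ℂ) else 0)


noncomputable section ProofAux

lemma psd_vecMulVec {n : Type} [Fintype n] (v : n → ℂ) :
    (Matrix.vecMulVec v (star v)).PosSemidef := by
  have h : Matrix.vecMulVec v (star v)
      = (Matrix.of fun (_ : Unit) j => star (v j))ᴴ
        * (Matrix.of fun (_ : Unit) j => star (v j)) := by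
    ext i j
    simp [Matrix.mul_apply, Matrix.vecMulVec_apply, Matrix.conjTranspose_apply]
  rw [h]
  exact Matrix.posSemidef_conjTranspose_mul_self _

lemma psd_kron {m n : Type} [Fintype m] [Fintype n]
    {A : Matrix m m ℂ} {B : Matrix n n ℂ} (hA : A.PosSemidef) (hB : B.PosSemidef) :
    (A ⊗ₖ B).PosSemidef := by
  exact hA.kronecker hB

def extV : (Fin 2 × (Fin 2 → Fin 3)) → ℂ :=
  fun p => if ((p.2 0 : ℕ) = (p.1 : ℕ) ∧ (p.2 1 : ℕ) = 2) then (1 / 2 : ℂ) else 0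

def extW : (Fin 2 × (Fin 2 → Fin 3)) → ℂ :=
  fun p => if ((p.2 1 : ℕ) = (p.1 : ℕ) ∧ (p.2 0 : ℕ) = 2) then (1 / 2 : ℂ) else 0

def extOmega : Matrix (Fin 2 × (Fin 2 → Fin 3)) (Fin 2 × (Fin 2 → Fin 3)) ℂ :=
  Matrix.vecMulVec extV (star extV) + Matrix.vecMulVec extW (star extW)

lemma star_extV : star extV = extV := by
  funext p
  simp only [Pi.star_apply, extV]
  split <;> simp

lemma star_extW : star extW = extW := by
  funext p
  simp only [Pi.star_apply, extW]
  split <;> simp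

lemma extOmega_apply (p q : Fin 2 × (Fin 2 → Fin 3)) :
    extOmega p q = extV p * extV q + extW p * extW q := by
  simp [extOmega, Matrix.vecMulVec_apply, star_extV, star_extW, Matrix.add_apply]

lemma extOmega_posSemidef : extOmega.PosSemidef :=
  (psd_vecMulVec extV).add (psd_vecMulVec extW)

lemma extOmega_trace : extOmega.trace = 1 := by
  rw [Matrix.trace]
  rw [show (∑ p : Fin 2 × (Fin 2 → Fin 3), extOmega.diag p)
    = ∑ a : Fin 2, ∑ f : Fin 2 → Fin 3, extOmega (a, f) (a, f) from by
      rw [Fintype.sum_prod_type]; rfl]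
  have hsum : ∀ a : Fin 2, ∑ f : Fin 2 → Fin 3, extOmega (a, f) (a, f)
      = ∑ p : Fin 3 × Fin 3, extOmega (a, ![p.1, p.2]) (a, ![p.1, p.2]) := by
    intro a
    exact (Equiv.sum_comp (finTwoArrowEquiv (Fin 3)).symm
      (fun f => extOmega (a, f) (a, f))).symm
  rw [Finset.sum_congr rfl (fun a _ => hsum a)]
  norm_num [extOmega_apply, extV, extW, Fin.sum_univ_succ, Fintype.sum_prod_type]

lemma perm_fin2 (π : Equiv.Perm (Fin 2)) : π = 1 ∨ π = Equiv.swap 0 1 := by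
  revert π; decide

lemma extOmega_perm (π : Equiv.Perm (Fin 2)) : permAction π extOmega = extOmega := by
  rcases perm_fin2 π with rfl | rfl
  · ext p q
    show extOmega (p.1, p.2 ∘ ⇑(1 : Equiv.Perm (Fin 2))) (q.1, q.2 ∘ _) = extOmega p q
    simp [Function.comp_def]
  · ext p q
    show extOmega (p.1, p.2 ∘ ⇑(Equiv.swap 0 1)) (q.1, q.2 ∘ _) = extOmega p q
    simp only [extOmega_apply, extV, extW, Function.comp_apply,
      Equiv.swap_apply_left, Equiv.swap_apply_right]
    ring

lemma extOmega_marginal :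
    marginalFirst (show (0:ℕ) < 2 by omega) extOmega = halfErasedBell := by
  ext ⟨a, b⟩ ⟨c, d⟩
  show (∑ f : Fin 2 → Fin 3,
    if f ⟨0, _⟩ = b then extOmega (a, f) (c, Function.update f ⟨0, _⟩ d) else 0) = _
  rw [← Equiv.sum_comp (finTwoArrowEquiv (Fin 3)).symm]
  have h0 : (⟨0, show (0:ℕ) < 2 by omega⟩ : Fin 2) = 0 := rfl
  simp only [finTwoArrowEquiv, Equiv.coe_fn_symm_mk, h0]
  have hupd : ∀ (x y z : Fin 3), Function.update ![x, y] 0 z = ![z, y] := by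
    intro x y z
    funext i
    match i with
    | 0 => simp
    | 1 => simp [Function.update]
  simp only [hupd, extOmega_apply, extV, extW, Matrix.cons_val_zero, Matrix.cons_val_one,
    Matrix.head_cons, halfErasedBell, Matrix.of_apply]
  fin_cases a <;> fin_cases b <;> fin_cases c <;> fin_cases d <;>
    norm_num [Fin.sum_univ_succ, Fintype.sum_prod_type]

lemma extendible_part : kExtendible 2 (le_refl 2) halfErasedBell :=
  ⟨extOmega, ⟨extOmega_posSemidef, extOmega_trace⟩, extOmega_perm, extOmega_marginal⟩

/-- partial transpose on the first factor -/
def ptA {A B : Type} (σ : Matrix (A × B) (A × B) ℂ) : Matrix (A × B) (A × B) ℂ :=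
  Matrix.of fun p q => σ (q.1, p.2) (p.1, q.2)

def witU : (Fin 2 × Fin 3) → ℂ :=
  fun p => if (p.1 : ℕ) = 0 ∧ (p.2 : ℕ) = 1 then 1
    else if (p.1 : ℕ) = 1 ∧ (p.2 : ℕ) = 0 then -1 else 0

lemma dot_sum {n ι : Type} [Fintype n] [Fintype ι] (u : n → ℂ) (F : ι → (n → ℂ)) :
    u ⬝ᵥ (∑ x, F x) = ∑ x, u ⬝ᵥ F x := by
  simp only [dotProduct, Finset.sum_apply, Finset.mul_sum]
  rw [Finset.sum_comm]

lemma not_sep_part : ¬ Separable halfErasedBell := by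
  rintro ⟨m, p, τ, ω, hp, _, hτ, hω, hsum⟩
  have hpt : ptA halfErasedBell = ∑ x, ((p x : ℂ) • ((τ x)ᵀ ⊗ₖ ω x)) := by
    ext ⟨a, b⟩ ⟨c, d⟩
    show halfErasedBell (c, b) (a, d) = _
    rw [hsum]
    simp only [Matrix.sum_apply, Matrix.smul_apply, Matrix.kronecker_apply,
      Matrix.transpose_apply, smul_eq_mul]
  have hnonneg : 0 ≤ star witU ⬝ᵥ (ptA halfErasedBell *ᵥ witU) := by
    rw [hpt, show (∑ x, ((p x : ℂ) • ((τ x)ᵀ ⊗ₖ ω x))) *ᵥ witU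
        = ∑ x, ((p x : ℂ) • ((τ x)ᵀ ⊗ₖ ω x)) *ᵥ witU from
      map_sum (Matrix.mulVec.addMonoidHomLeft witU) _ _, dot_sum]
    refine Finset.sum_nonneg fun x _ => ?_
    rw [Matrix.smul_mulVec, dotProduct_smul, smul_eq_mul]
    have h1 : (0:ℂ) ≤ (p x : ℂ) := by
      rw [Complex.zero_le_real]; exact hp x
    exact mul_nonneg h1 ((psd_kron (hτ x).1.transpose (hω x).1).dotProduct_mulVec_nonneg witU)
  have hval : star witU ⬝ᵥ (ptA halfErasedBell *ᵥ witU) = -(1/2 : ℂ) := by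
    simp only [dotProduct, Matrix.mulVec, Pi.star_apply, Fintype.sum_prod_type,
      ptA, halfErasedBell, witU, Matrix.of_apply, dotProduct]
    norm_num [Fin.sum_univ_succ]
  rw [hval] at hnonneg
  have : ¬ ((0:ℂ) ≤ -(1/2 : ℂ)) := by
    rw [Complex.le_def]
    norm_num
  exact this hnonneg

end ProofAux

/-- the state `½ Φ_{AB} + ½ (I_A/2 ⊗ |e⟩⟨e|_B)` is two-extendible with
respect to `B` but not separable. -/
theorem halfErasedBell_twoExtendible_not_separable :
    kExtendible 2 (le_refl 2) halfErasedBell ∧ ¬ Separable halfErasedBell :=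
  ⟨extendible_part, not_sep_part⟩
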